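/- arXiv:0707.1069 — 5 statements merged into one kernel-verified Lean document; each statement's English description precedes it below -/
import Mathlib

section
/- Let G be a finite simple graph and C a proper coloring of G. If v and w lie in distinct color classes of C and both directed edges (v,w) and (w,v) are C-lonely, then exchanging v and w between their color classes yields another proper coloring C' of G with Frame(C') = Frame(C). -/
open Finset

variable {V : Type*} [Fintype V] [DecidableEq V]

/-- A (proper) coloring of `G`: a partition of the vertex set into nonempty independent sets. -/
def IsColoring (G : SimpleGraph V) (C : Finset (Finset V)) : Prop :=
  (∀ I ∈ C, I.Nonempty) ∧
  (∀ v : V, ∃! I, I ∈ C ∧ v ∈ I) ∧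
  (∀ I ∈ C, ∀ v ∈ I, ∀ w ∈ I, ¬ G.Adj v w)

/-- The frame of a coloring: the multiset of the orders of its color classes. -/
def Frame (C : Finset (Finset V)) : Multiset ℕ :=
  C.val.map Finset.card

/-- The directed edge `(v, w)` is `C`-lonely: `w` lies in a color class `I` not containing `v`
and `N(v) ∩ I = {w}`. -/
def Lonely (G : SimpleGraph V) (C : Finset (Finset V)) (v w : V) : Prop :=
  ∃ I ∈ C, v ∉ I ∧ w ∈ I ∧ ∀ x ∈ I, (G.Adj v x ↔ x = w)

/-- The chromatic number: the minimum number of color classes in a proper coloring. -/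
noncomputable def chi (G : SimpleGraph V) : ℕ :=
  sInf {n | ∃ C : Finset (Finset V), IsColoring G C ∧ C.card = n}

/-- An optimal coloring: a proper coloring with `χ(G)` color classes. -/
def IsOptimalColoring (G : SimpleGraph V) (C : Finset (Finset V)) : Prop :=
  IsColoring G C ∧ C.card = chi G

/-- A (directed) path in the `C`-lonely graph `L_C(G)`, as a nonempty duplicate-free list of
vertices whose consecutive pairs are `C`-lonely edges. -/
def IsLonelyPath (G : SimpleGraph V) (C : Finset (Finset V)) (p : List V) : Prop :=
  p ≠ [] ∧ p.Nodup ∧ List.Chain' (Lonely G C) p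

/-- The stinginess `ι(G)`: the maximum number of singleton color classes appearing in an
optimal coloring of `G`. -/
noncomputable def stinginess (G : SimpleGraph V) : ℕ :=
  sSup {n | ∃ C : Finset (Finset V), IsOptimalColoring G C ∧
    (C.filter fun I => I.card = 1).card = n}

/-- The independence number `α(G)`. -/
noncomputable def indepNum (G : SimpleGraph V) : ℕ :=
  sSup {n | ∃ s : Finset V, (∀ v ∈ s, ∀ w ∈ s, ¬ G.Adj v w) ∧ s.card = n}

/-- An `r`-bounded coloring has all color classes of order at most `r`. -/
def RBounded (r : ℕ) (C : Finset (Finset V)) : Prop :=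
  ∀ I ∈ C, I.card ≤ r

/-- `χ_r(G)`: the minimum number of color classes in an `r`-bounded coloring of `G`. -/
noncomputable def chiR (G : SimpleGraph V) (r : ℕ) : ℕ :=
  sInf {n | ∃ C : Finset (Finset V), IsColoring G C ∧ RBounded r C ∧ C.card = n}

/-- An optimal `r`-bounded coloring. -/
def IsOptimalRBounded (G : SimpleGraph V) (r : ℕ) (C : Finset (Finset V)) : Prop :=
  IsColoring G C ∧ RBounded r C ∧ C.card = chiR G r

/-- `M_r(G)`: the maximum number of order-`r` color classes in an optimal `r`-bounded
coloring of `G`. -/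
noncomputable def Mr (G : SimpleGraph V) (r : ℕ) : ℕ :=
  sSup {n | ∃ C : Finset (Finset V), IsOptimalRBounded G r C ∧
    (C.filter fun I => I.card = r).card = n}

/-- The `r`-bounded stinginess `ι_r(G)`: the maximum number of singleton color classes in an
optimal `r`-bounded coloring of `G`. -/
noncomputable def stinginessR (G : SimpleGraph V) (r : ℕ) : ℕ :=
  sSup {n | ∃ C : Finset (Finset V), IsOptimalRBounded G r C ∧
    (C.filter fun I => I.card = 1).card = n}

/-- `P` is a frame property: membership in `P` only depends on the frame. -/
def IsFrameProperty (G : SimpleGraph V) (P : Finset (Finset V) → Prop) : Prop :=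
  ∀ C C' : Finset (Finset V), IsColoring G C → IsColoring G C' →
    Frame C = Frame C' → P C → P C'

/-- `P` is singleton-friendly: `P` is preserved by merging two singleton color classes. -/
def IsSingletonFriendly (G : SimpleGraph V) (P : Finset (Finset V) → Prop) : Prop :=
  ∀ C : Finset (Finset V), IsColoring G C → ∀ a b : V, a ≠ b → ¬ G.Adj a b →
    ({a} : Finset V) ∈ C → ({b} : Finset V) ∈ C → P C →
      P (insert ({a, b} : Finset V) ((C.erase {a}).erase {b}))

/-- A `P`-optimal coloring: a coloring satisfying `P` with the minimum number of color classes
among colorings satisfying `P`. -/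
def IsPOptimal (G : SimpleGraph V) (P : Finset (Finset V) → Prop)
    (C : Finset (Finset V)) : Prop :=
  IsColoring G C ∧ P C ∧
    ∀ C' : Finset (Finset V), IsColoring G C' → P C' → C.card ≤ C'.card

/-- `Frame_m(C)`: the entries of the frame of `C` that are at least `m`. -/
def FrameGe (m : ℕ) (C : Finset (Finset V)) : Multiset ℕ :=
  (Frame C).filter (fun k => m ≤ k)

/-- The matching number `ν(G)`: the maximum number of edges in a matching of `G`. -/
noncomputable def matchingNumber (G : SimpleGraph V) : ℕ :=
  sSup {n | ∃ M : G.Subgraph, M.IsMatching ∧ M.edgeSet.ncard = n}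

/-! Since `N(v) ∩ I_w = {w}` and `N(w) ∩ I_v = {v}`, the only neighbour of `v` in `I_w` is `w`,
which leaves `I_w` as `v` enters it, and symmetrically for `w`; so both new classes are
independent, and each keeps its order. -/

section Swap

variable {α : Type*} {G : SimpleGraph α} {C : Finset (Finset α)}

theorem IsColoring.eq_of_mem (hC : IsColoring G C) {I J : Finset α} {u : α}
    (hI : I ∈ C) (hJ : J ∈ C) (huI : u ∈ I) (huJ : u ∈ J) : I = J :=
  (hC.2.1 u).unique ⟨hI, huI⟩ ⟨hJ, huJ⟩

theorem IsColoring.disjoint_of_ne (hC : IsColoring G C) {I J : Finset α}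
    (hI : I ∈ C) (hJ : J ∈ C) (hIJ : I ≠ J) : Disjoint I J :=
  disjoint_left.2 fun _ huI huJ => hIJ (hC.eq_of_mem hI hJ huI huJ)

theorem Lonely.adj_iff (hC : IsColoring G C) {v w : α} (h : Lonely G C v w) {I : Finset α}
    (hI : I ∈ C) (hw : w ∈ I) : ∀ x ∈ I, G.Adj v x ↔ x = w := by
  obtain ⟨J, hJ, -, hwJ, hadj⟩ := h
  exact hC.eq_of_mem hJ hI hwJ hw ▸ hadj

variable [DecidableEq α]

theorem IsColoring.notMem_union_of_mem_erase_erase (hC : IsColoring G C) {I J K : Finset α}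
    (hI : I ∈ C) (hJ : J ∈ C) (hK : K ∈ (C.erase I).erase J) {u : α} (hu : u ∈ K) :
    u ∉ I ∪ J := by
  obtain ⟨hKJ, hKI, hKC⟩ : K ≠ J ∧ K ≠ I ∧ K ∈ C := by simpa using hK
  rw [mem_union]
  rintro (huI | huJ)
  exacts [hKI (hC.eq_of_mem hKC hI hu huI), hKJ (hC.eq_of_mem hKC hJ hu huJ)]

theorem IsColoring.notMem_erase_erase (hC : IsColoring G C) {I J I' : Finset α}
    (hI : I ∈ C) (hJ : J ∈ C) (hI' : I'.Nonempty) (hsub : I' ⊆ I ∪ J) :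
    I' ∉ (C.erase I).erase J := fun hmem =>
  let ⟨_, hu⟩ := hI'
  hC.notMem_union_of_mem_erase_erase hI hJ hmem hu (hsub hu)

theorem IsColoring.existsUnique_replace_pair (hC : IsColoring G C) {I J I' J' : Finset α}
    (hI : I ∈ C) (hJ : J ∈ C) (hdisj : Disjoint I' J') (hcover : I' ∪ J' = I ∪ J) (u : α) :
    ∃! X, X ∈ insert I' (insert J' ((C.erase I).erase J)) ∧ u ∈ X := by
  have hrest : ∀ K ∈ (C.erase I).erase J, u ∈ K → u ∉ I' ∪ J' := fun _ hK hu =>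
    hcover ▸ hC.notMem_union_of_mem_erase_erase hI hJ hK hu
  simp only [mem_insert]
  by_cases hu : u ∈ I' ∪ J'
  · have hclass : ∀ X, (X = I' ∨ X = J' ∨ X ∈ (C.erase I).erase J) → u ∈ X →
        X = I' ∧ u ∈ I' ∨ X = J' ∧ u ∈ J' := by
      rintro X (rfl | rfl | hX) huX
      exacts [.inl ⟨rfl, huX⟩, .inr ⟨rfl, huX⟩, absurd hu (hrest X hX huX)]
    rcases mem_union.1 hu with hu | hu
    · refine ⟨I', ⟨.inl rfl, hu⟩, fun X ⟨hX, huX⟩ => ?_⟩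
      rcases hclass X hX huX with h | h
      exacts [h.1, absurd h.2 (disjoint_left.1 hdisj hu)]
    · refine ⟨J', ⟨.inr (.inl rfl), hu⟩, fun X ⟨hX, huX⟩ => ?_⟩
      rcases hclass X hX huX with h | h
      exacts [absurd hu (disjoint_left.1 hdisj h.2), h.1]
  · obtain ⟨K, ⟨hK, huK⟩, hKuniq⟩ := hC.2.1 u
    have hKrest : K ∈ (C.erase I).erase J := by
      rw [hcover] at hu
      simp only [mem_erase]
      refine ⟨?_, ?_, hK⟩ <;> rintro rfl <;> simp [huK] at hu
    refine ⟨K, ⟨.inr (.inr hKrest), huK⟩, fun X ⟨hX, huX⟩ => ?_⟩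
    rcases hX with rfl | rfl | hX
    · exact absurd (mem_union_left _ huX) hu
    · exact absurd (mem_union_right _ huX) hu
    · exact hKuniq X ⟨mem_of_mem_erase (mem_of_mem_erase hX), huX⟩

theorem IsColoring.replace_pair (hC : IsColoring G C) {I J I' J' : Finset α}
    (hI : I ∈ C) (hJ : J ∈ C) (hI'ne : I'.Nonempty) (hJ'ne : J'.Nonempty)
    (hdisj : Disjoint I' J') (hcover : I' ∪ J' = I ∪ J)
    (hI'ind : ∀ x ∈ I', ∀ y ∈ I', ¬ G.Adj x y) (hJ'ind : ∀ x ∈ J', ∀ y ∈ J', ¬ G.Adj x y) :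
    IsColoring G (insert I' (insert J' ((C.erase I).erase J))) := by
  refine ⟨fun X hX => ?_, hC.existsUnique_replace_pair hI hJ hdisj hcover, fun X hX => ?_⟩
  · rcases mem_insert.1 hX with rfl | hX
    · exact hI'ne
    rcases mem_insert.1 hX with rfl | hX
    exacts [hJ'ne, hC.1 X (mem_of_mem_erase (mem_of_mem_erase hX))]
  · rcases mem_insert.1 hX with rfl | hX
    · exact hI'ind
    rcases mem_insert.1 hX with rfl | hX
    exacts [hJ'ind, hC.2.2 X (mem_of_mem_erase (mem_of_mem_erase hX))]

theorem frame_insert {X : Finset α} (h : X ∉ C) : Frame (insert X C) = X.card ::ₘ Frame C := by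
  simp only [Frame, insert_val_of_notMem h, Multiset.map_cons]

theorem frame_eq_cons_frame_erase {X : Finset α} (h : X ∈ C) :
    Frame C = X.card ::ₘ Frame (C.erase X) := by
  rw [← frame_insert (notMem_erase X C), insert_erase h]

theorem frame_replace_pair {I J I' J' : Finset α} (hI : I ∈ C) (hJ : J ∈ C) (hIJ : I ≠ J)
    (hI' : I' ∉ insert J' ((C.erase I).erase J)) (hJ' : J' ∉ (C.erase I).erase J)
    (hcardI : I'.card = I.card) (hcardJ : J'.card = J.card) :
    Frame (insert I' (insert J' ((C.erase I).erase J))) = Frame C := by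
  rw [frame_insert hI', frame_insert hJ', frame_eq_cons_frame_erase hI,
    frame_eq_cons_frame_erase (mem_erase.2 ⟨hIJ.symm, hJ⟩), hcardI, hcardJ]

theorem indep_insert_erase {I : Finset α} {v w : α} (hI : ∀ x ∈ I, ∀ y ∈ I, ¬ G.Adj x y)
    (hw : ∀ x ∈ I, G.Adj w x ↔ x = v) :
    ∀ x ∈ insert w (I.erase v), ∀ y ∈ insert w (I.erase v), ¬ G.Adj x y := by
  simp only [mem_insert, mem_erase]
  rintro x (rfl | ⟨hxv, hx⟩) y (rfl | ⟨hyv, hy⟩) hxy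
  · exact G.irrefl hxy
  · exact hyv ((hw y hy).1 hxy)
  · exact hxv ((hw x hx).1 hxy.symm)
  · exact hI x hx y hy hxy

end Swap

section SwapFinset

variable {α : Type*} [DecidableEq α] {I J : Finset α} {v w : α}

theorem card_insert_erase (hv : v ∈ I) (hw : w ∉ I) : (insert w (I.erase v)).card = I.card := by
  rw [card_insert_of_notMem (fun h => hw (mem_of_mem_erase h)), card_erase_add_one hv]

theorem union_insert_erase_swap (hv : v ∈ I) (hw : w ∈ J) :
    insert w (I.erase v) ∪ insert v (J.erase w) = I ∪ J := by
  ext u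
  simp only [mem_union, mem_insert, mem_erase]
  constructor
  · rintro ((rfl | ⟨-, hu⟩) | (rfl | ⟨-, hu⟩))
    exacts [.inr hw, .inl hu, .inl hv, .inr hu]
  · rintro (hu | hu)
    · by_cases huv : u = v
      exacts [.inr (.inl huv), .inl (.inr ⟨huv, hu⟩)]
    · by_cases huw : u = w
      exacts [.inl (.inl huw), .inr (.inr ⟨huw, hu⟩)]

theorem disjoint_insert_erase_swap (hIJ : Disjoint I J) (hv : v ∈ I) (hw : w ∈ J) :
    Disjoint (insert w (I.erase v)) (insert v (J.erase w)) := by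
  refine disjoint_left.2 fun u hA hB => ?_
  simp only [mem_insert, mem_erase] at hA hB
  rcases hA with rfl | ⟨huv, huI⟩ <;> rcases hB with rfl | ⟨huw, huJ⟩
  exacts [disjoint_left.1 hIJ hv hw, huw rfl, huv rfl, disjoint_left.1 hIJ huI huJ]

end SwapFinset

theorem statement_0 (G : SimpleGraph V)
    (C : Finset (Finset V)) (hC : IsColoring G C)
    (v w : V) (Iv Iw : Finset V) (hIv : Iv ∈ C) (hIw : Iw ∈ C)
    (hv : v ∈ Iv) (hw : w ∈ Iw) (hne : Iv ≠ Iw)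
    (hvw : Lonely G C v w) (hwv : Lonely G C w v) :
    IsColoring G (insert (insert w (Iv.erase v))
      (insert (insert v (Iw.erase w)) ((C.erase Iv).erase Iw))) ∧
    Frame (insert (insert w (Iv.erase v))
      (insert (insert v (Iw.erase w)) ((C.erase Iv).erase Iw))) = Frame C := by
  have hIvw : Disjoint Iv Iw := hC.disjoint_of_ne hIv hIw hne
  have hdisj := disjoint_insert_erase_swap hIvw hv hw
  have hcover := union_insert_erase_swap hv hw
  have hnew : ∀ X ⊆ Iv ∪ Iw, X.Nonempty → X ∉ (C.erase Iv).erase Iw := fun _ hX hXne =>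
    hC.notMem_erase_erase hIv hIw hXne hX
  refine ⟨hC.replace_pair hIv hIw (insert_nonempty _ _) (insert_nonempty _ _) hdisj hcover
      (indep_insert_erase (hC.2.2 Iv hIv) (hwv.adj_iff hC hIv hv))
      (indep_insert_erase (hC.2.2 Iw hIw) (hvw.adj_iff hC hIw hw)),
    frame_replace_pair hIv hIw hne ?_ ?_ (card_insert_erase hv (disjoint_right.1 hIvw hw))
      (card_insert_erase hw (disjoint_left.1 hIvw hv))⟩
  · rw [mem_insert, not_or]
    exact ⟨hdisj.ne (insert_nonempty _ _).ne_empty,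
      hnew _ (hcover ▸ subset_union_left) (insert_nonempty _ _)⟩
  · exact hnew _ (hcover ▸ subset_union_right) (insert_nonempty _ _)
end

section
/- (Lonely Path Lemma) Let G be a finite simple graph and C an optimal coloring of G. Suppose {a} and {b} are two distinct singleton color classes of C, and p_a and p_b are vertex-disjoint directed paths in the C-lonely graph L_C(G), starting at a and b respectively, each having at most one vertex in any given color class of C. Then every vertex of p_a is adjacent in G to every vertex of p_b. -/
open Finset

variable {V : Type*} [Fintype V] [DecidableEq V]

/-!
Suppose some vertex of `p_a` is not adjacent to some vertex of `p_b`, and take such a pair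
`x = p_a[i]`, `y = p_b[j]` with all pairs from the prefixes `p_a[..i]`, `p_b[..j]` other than
`(x, y)` adjacent. If `x` and `y` shared a class, the lonely edge entering `x` (or the singleton
class `{a}` when `x = a`) would force `y = x`. Otherwise the two prefixes are jointly rainbow, and
moving each of their vertices into the class of its successor (proper, since the edges are lonely)
empties `{a}` and `{b}` and frees `x` and `y` to form one new class: a coloring with fewer classes.
-/

open Finset

theorem List.mem_take_add_one_iff {α : Type*} {l : List α} {n : ℕ} {z : α} :
    z ∈ l.take (n + 1) ↔ z ∈ l.take n ∨ l[n]? = some z := by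
  simp [List.take_add_one, eq_comm]

theorem card_sdiff_union_add_card_le {α : Type*} [DecidableEq α] {C S D : Finset α}
    (hS : S ⊆ C) :
    (C \ S ∪ D).card + S.card ≤ C.card + D.card := by
  have := card_union_le (C \ S) D
  have := card_sdiff_add_card_eq_card hS
  omega

theorem mem_sdiff_union_iff_of_forall_not_mem {α : Type*} [DecidableEq α]
    {C S D : Finset (Finset α)} (hcover : ∀ v, (∃ I ∈ S, v ∈ I) ↔ ∃ J ∈ D, v ∈ J) {v : α}
    (hv : ∀ I ∈ S, v ∉ I) {K : Finset α} (hvK : v ∈ K) : K ∈ C \ S ∪ D ↔ K ∈ C := by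
  have hKD : K ∉ D := fun hK => by
    obtain ⟨I, hI, hvI⟩ := (hcover v).2 ⟨K, hK, hvK⟩
    exact hv I hI hvI
  have hKS : K ∉ S := fun hK => hv K hK hvK
  simp [hKD, hKS]

section

omit [Fintype V] [DecidableEq V]

variable {G : SimpleGraph V} {C : Finset (Finset V)}

def Separated (C : Finset (Finset V)) (x y : V) : Prop :=
  ∀ I ∈ C, x ∈ I → y ∉ I

def IsRainbow (C : Finset (Finset V)) (l : List V) : Prop :=
  l.Pairwise (Separated C)

theorem Separated.symm {x y : V} (h : Separated C x y) : Separated C y x :=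
  fun I hI hy hx => h I hI hx hy

theorem Separated.of_agree {C₁ : Finset (Finset V)} {x y : V} (h : Separated C x y)
    (hx : ∀ K, x ∈ K → (K ∈ C₁ ↔ K ∈ C)) : Separated C₁ x y :=
  fun K hK hxK => h K ((hx K hxK).1 hK) hxK

theorem Lonely.of_agree {C₁ : Finset (Finset V)} {u w : V} (h : Lonely G C u w)
    (hw : ∀ K, w ∈ K → (K ∈ C₁ ↔ K ∈ C)) : Lonely G C₁ u w := by
  obtain ⟨K, hK, huK, hwK, hadj⟩ := h
  exact ⟨K, (hw K hwK).2 hK, huK, hwK, hadj⟩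

theorem isRainbow_of_nodup {l : List V} (hl : l.Nodup)
    (hclass : ∀ I ∈ C, ∀ x ∈ l, ∀ y ∈ l, x ∈ I → y ∈ I → x = y) : IsRainbow C l :=
  hl.imp_of_mem fun hx hy hne I hI hxI hyI => hne (hclass I hI _ hx _ hy hxI hyI)

namespace IsColoring

variable {a u v w x y : V} {l : List V} {i : ℕ} {I J : Finset V}

theorem eq_of_mem_s1 (hC : IsColoring G C) (hI : I ∈ C) (hJ : J ∈ C)
    (hvI : v ∈ I) (hvJ : v ∈ J) : I = J :=
  (hC.2.1 v).unique ⟨hI, hvI⟩ ⟨hJ, hvJ⟩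

theorem separated_of_adj (hC : IsColoring G C) (h : G.Adj x y) : Separated C x y :=
  fun I hI hx hy => hC.2.2 I hI x hx y hy h

theorem eq_of_lonely_of_adj (hC : IsColoring G C) (h : Lonely G C u w) (hadj : G.Adj u y)
    (hI : I ∈ C) (hw : w ∈ I) (hy : y ∈ I) : y = w := by
  obtain ⟨J, hJ, -, hwJ, hJadj⟩ := h
  rw [hC.eq_of_mem_s1 hI hJ hw hwJ] at hy
  exact (hJadj y hy).1 hadj

theorem eq_of_forall_adj_take (hC : IsColoring G C) (ha : {a} ∈ C)
    (hl : (a :: l).IsChain (Lonely G C)) (hx : (a :: l)[i]? = some x) (hI : I ∈ C) (hxI : x ∈ I)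
    (hyI : y ∈ I) (hadj : ∀ z ∈ (a :: l).take i, G.Adj z y) : y = x := by
  cases i with
  | zero =>
    obtain rfl : a = x := by simpa using hx
    rw [hC.eq_of_mem_s1 hI ha hxI (mem_singleton_self a)] at hyI
    exact mem_singleton.1 hyI
  | succ k =>
    obtain ⟨hk, rfl⟩ := List.getElem?_eq_some_iff.1 hx
    exact hC.eq_of_lonely_of_adj (hl.getElem k hk)
      (hadj _ (List.mem_take_add_one_iff.2 (Or.inr (List.getElem?_eq_getElem _)))) hI hxI hyI

end IsColoring

structure ReducingPaths (G : SimpleGraph V) (C : Finset (Finset V)) (a : V) (p : List V) (b : V)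
    (q : List V) : Prop where
  isColoring : IsColoring G C
  singleton_left : {a} ∈ C
  singleton_right : {b} ∈ C
  isChain_left : (a :: p).IsChain (Lonely G C)
  isChain_right : (b :: q).IsChain (Lonely G C)
  isRainbow : IsRainbow C (a :: p ++ b :: q)
  not_adj : ∀ x ∈ (a :: p).getLast?, ∀ y ∈ (b :: q).getLast?, ¬ G.Adj x y

namespace ReducingPaths

variable {a b x y : V} {p q : List V} {i j : ℕ}

theorem swap (h : ReducingPaths G C a p b q) : ReducingPaths G C b q a p where
  isColoring := h.isColoring
  singleton_left := h.singleton_right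
  singleton_right := h.singleton_left
  isChain_left := h.isChain_right
  isChain_right := h.isChain_left
  isRainbow := (List.pairwise_append_comm Separated.symm).1 h.isRainbow
  not_adj x hx y hy hxy := h.not_adj y hy x hx hxy.symm

theorem of_take (hC : IsColoring G C) (ha : {a} ∈ C) (hb : {b} ∈ C)
    (hp : (a :: p).IsChain (Lonely G C)) (hq : (b :: q).IsChain (Lonely G C))
    (hrp : IsRainbow C (a :: p)) (hrq : IsRainbow C (b :: q))
    (hx : (a :: p)[i]? = some x) (hy : (b :: q)[j]? = some y) (hxy : ¬ G.Adj x y)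
    (hsep : ∀ x' ∈ (a :: p).take (i + 1), ∀ y' ∈ (b :: q).take (j + 1), Separated C x' y') :
    ReducingPaths G C a (p.take i) b (q.take j) := by
  rw [List.take_succ_cons, List.take_succ_cons] at hsep
  refine ⟨hC, ha, hb, by simpa using hp.take (i + 1), by simpa using hq.take (j + 1),
    List.pairwise_append.2 ⟨?_, ?_, hsep⟩, ?_⟩
  · simpa using hrp.sublist (List.take_sublist (i + 1) _)
  · simpa using hrq.sublist (List.take_sublist (j + 1) _)
  · rw [← List.take_succ_cons, ← List.take_succ_cons, List.getLast?_take, List.getLast?_take]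
    simpa [hx, hy] using hxy

end ReducingPaths

variable [DecidableEq V]

namespace IsColoring

theorem exchange (hC : IsColoring G C) {S D : Finset (Finset V)} (hS : S ⊆ C)
    (hD : ∀ J ∈ D, J.Nonempty ∧ ∀ v ∈ J, ∀ w ∈ J, ¬ G.Adj v w)
    (hDunique : ∀ J ∈ D, ∀ J' ∈ D, ∀ v ∈ J, v ∈ J' → J = J')
    (hcover : ∀ v, (∃ I ∈ S, v ∈ I) ↔ ∃ J ∈ D, v ∈ J) :
    IsColoring G (C \ S ∪ D) := by
  refine ⟨fun I hI => ?_, fun v => ?_, fun I hI => ?_⟩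
  · rcases mem_union.1 hI with hI | hI
    exacts [hC.1 I (mem_sdiff.1 hI).1, (hD I hI).1]
  · by_cases hv : ∃ I ∈ S, v ∈ I
    · obtain ⟨J, hJ, hvJ⟩ := (hcover v).1 hv
      refine ⟨J, ⟨mem_union_right _ hJ, hvJ⟩, fun K ⟨hK, hvK⟩ => ?_⟩
      rcases mem_union.1 hK with hK | hK
      · obtain ⟨I, hIS, hvI⟩ := hv
        rw [mem_sdiff] at hK
        exact absurd (hC.eq_of_mem_s1 (hS hIS) hK.1 hvI hvK ▸ hIS) hK.2
      · exact hDunique K hK J hJ v hvK hvJ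
    · obtain ⟨I, ⟨hI, hvI⟩, hIunique⟩ := hC.2.1 v
      refine ⟨I, ⟨mem_union_left _ (mem_sdiff.2 ⟨hI, fun hIS => hv ⟨I, hIS, hvI⟩⟩), hvI⟩,
        fun K ⟨hK, hvK⟩ => ?_⟩
      rcases mem_union.1 hK with hK | hK
      · exact hIunique K ⟨(mem_sdiff.1 hK).1, hvK⟩
      · exact absurd ((hcover v).2 ⟨K, hK, hvK⟩) hv
  · rcases mem_union.1 hI with hI | hI
    exacts [hC.2.2 I (mem_sdiff.1 hI).1, (hD I hI).2]

theorem exists_card_lt_of_singletons (hC : IsColoring G C) {a b : V} (ha : {a} ∈ C)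
    (hb : {b} ∈ C) (hab : a ≠ b) (hadj : ¬ G.Adj a b) :
    ∃ C' : Finset (Finset V), IsColoring G C' ∧ C'.card < C.card := by
  have hS : {{a}, {b}} ⊆ C := insert_subset ha (singleton_subset_iff.2 hb)
  refine ⟨C \ {{a}, {b}} ∪ {{a, b}}, hC.exchange hS ?_ ?_ ?_, ?_⟩
  · simp only [mem_singleton, forall_eq, insert_nonempty, mem_insert, true_and]
    rintro v (rfl | rfl) w (rfl | rfl)
    exacts [G.irrefl, hadj, fun h => hadj h.symm, G.irrefl]
  · simp
  · simp
  · have := card_sdiff_union_add_card_le (D := {{a, b}}) hS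
    rw [card_pair (by simpa using hab), card_singleton] at this
    omega

theorem not_adj_insert_erase (hC : IsColoring G C) {a a' : V} {I : Finset V} (hI : I ∈ C)
    (hadj : ∀ x ∈ I, G.Adj a x ↔ x = a') :
    ∀ v ∈ insert a (I.erase a'), ∀ w ∈ insert a (I.erase a'), ¬ G.Adj v w := by
  simp only [mem_insert, mem_erase]
  rintro v (rfl | ⟨hv, hvI⟩) w (rfl | ⟨hw, hwI⟩)
  · exact G.irrefl
  · exact fun h => hw ((hadj w hwI).1 h)
  · exact fun h => hv ((hadj v hvI).1 h.symm)
  · exact hC.2.2 I hI v hvI w hwI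

/-- Moving the singleton class `{a}` along the lonely edge `a → a'`: `a` joins the class of `a'`
in place of `a'`, which becomes a singleton class. -/
theorem exists_shift (hC : IsColoring G C) {a a' : V} (ha : {a} ∈ C) (h : Lonely G C a a') :
    ∃ C₁ : Finset (Finset V), IsColoring G C₁ ∧ C₁.card ≤ C.card ∧ {a'} ∈ C₁ ∧
      ∀ v, Separated C a v → Separated C a' v → ∀ K, v ∈ K → (K ∈ C₁ ↔ K ∈ C) := by
  obtain ⟨I, hI, haI, ha'I, hadj⟩ := h
  have haa' : a ≠ a' := by rintro rfl; exact haI ha'I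
  have hS : {{a}, I} ⊆ C := insert_subset ha (singleton_subset_iff.2 hI)
  have hcover : ∀ v, (∃ J ∈ ({{a}, I} : Finset (Finset V)), v ∈ J) ↔
      ∃ J ∈ ({{a'}, insert a (I.erase a')} : Finset (Finset V)), v ∈ J := by
    intro v
    simp only [mem_insert, mem_singleton, exists_eq_or_imp, exists_eq_left, mem_erase]
    constructor
    · rintro (rfl | hv)
      exacts [Or.inr (Or.inl rfl), (eq_or_ne v a').elim Or.inl fun h => Or.inr (Or.inr ⟨h, hv⟩)]
    · rintro (rfl | rfl | ⟨-, hv⟩)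
      exacts [Or.inr ha'I, Or.inl rfl, Or.inr hv]
  refine ⟨C \ {{a}, I} ∪ {{a'}, insert a (I.erase a')}, hC.exchange hS ?_ ?_ hcover, ?_, by simp,
    ?_⟩
  · intro J hJ
    simp only [mem_insert, mem_singleton] at hJ
    rcases hJ with rfl | rfl
    exacts [⟨singleton_nonempty a', by simp⟩,
      ⟨insert_nonempty _ _, hC.not_adj_insert_erase hI hadj⟩]
  · have hdisj : a' ∉ insert a (I.erase a') := by simp [haa'.symm]
    intro J hJ J' hJ' v hvJ hvJ'
    simp only [mem_insert, mem_singleton] at hJ hJ'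
    rcases hJ with rfl | rfl <;> rcases hJ' with rfl | rfl
    · rfl
    · exact absurd (mem_singleton.1 hvJ ▸ hvJ') hdisj
    · exact absurd (mem_singleton.1 hvJ' ▸ hvJ) hdisj
    · rfl
  · have := card_sdiff_union_add_card_le (D := {{a'}, insert a (I.erase a')}) hS
    have hne : ({a} : Finset V) ≠ I := by rintro rfl; exact haI (mem_singleton_self a)
    rw [card_pair hne] at this
    have := card_le_two (a := ({a'} : Finset V)) (b := insert a (I.erase a'))
    omega
  · intro v hav ha'v K hvK
    refine mem_sdiff_union_iff_of_forall_not_mem hcover ?_ hvK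
    simp only [mem_insert, mem_singleton, forall_eq_or_imp, forall_eq]
    exact ⟨mem_singleton.not.1 (hav _ ha (mem_singleton_self a)), ha'v I hI ha'I⟩

end IsColoring

namespace ReducingPaths

variable {a b : V} {p q : List V}

theorem shift {a' : V} (h : ReducingPaths G C a (a' :: p) b q) :
    ∃ C₁ : Finset (Finset V), C₁.card ≤ C.card ∧ ReducingPaths G C₁ a' p b q := by
  obtain ⟨hC, ha, hb, hp, hq, hr, hadj⟩ := h
  obtain ⟨C₁, hC₁, hcard, ha', hagree⟩ := hC.exists_shift ha (List.isChain_cons_cons.1 hp).1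
  simp only [IsRainbow, List.cons_append, List.pairwise_cons, List.mem_cons] at hr
  obtain ⟨hsep_a, hsep_a', hr⟩ := hr
  have hagree' : ∀ v ∈ p ++ b :: q, ∀ K, v ∈ K → (K ∈ C₁ ↔ K ∈ C) :=
    fun v hv => hagree v (hsep_a v (Or.inr hv)) (hsep_a' v hv)
  refine ⟨C₁, hcard, hC₁, ha', (hagree' b (by simp) _ (mem_singleton_self b)).2 hb, ?_, ?_, ?_, ?_⟩
  · exact (List.isChain_cons_cons.1 hp).2.imp_of_mem_tail_imp fun _ w _ hw h =>
      h.of_agree (hagree' w (List.mem_append_left _ hw))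
  · exact hq.imp_of_mem_tail_imp fun _ w _ hw h =>
      h.of_agree (hagree' w (List.mem_append_right _ (List.mem_cons_of_mem b hw)))
  · simp only [IsRainbow, List.cons_append, List.pairwise_cons]
    exact ⟨fun v hv => ((hsep_a' v hv).symm.of_agree (hagree' v hv)).symm,
      hr.imp_of_mem fun hx _ h => h.of_agree (hagree' _ hx)⟩
  · simpa only [List.getLast?_cons_cons] using hadj

theorem exists_card_lt (h : ReducingPaths G C a p b q) :
    ∃ C' : Finset (Finset V), IsColoring G C' ∧ C'.card < C.card := by
  induction p generalizing C a with
  | nil =>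
    induction q generalizing C b with
    | nil =>
      have hab : a ≠ b := fun hab =>
        h.isRainbow.rel_of_mem_append (List.mem_cons_self) (hab ▸ List.mem_cons_self)
          {a} h.singleton_left (mem_singleton_self a) (mem_singleton_self a)
      exact h.isColoring.exists_card_lt_of_singletons h.singleton_left h.singleton_right hab
        (h.not_adj a (by simp) b (by simp))
    | cons b' q ih =>
      obtain ⟨C₁, hcard, h₁⟩ := h.swap.shift
      obtain ⟨C', hC', hlt⟩ := ih h₁.swap
      exact ⟨C', hC', hlt.trans_le hcard⟩
  | cons a' p ih =>
    obtain ⟨C₁, hcard, h₁⟩ := h.shift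
    obtain ⟨C', hC', hlt⟩ := ih h₁
    exact ⟨C', hC', hlt.trans_le hcard⟩

theorem not_isOptimalColoring (h : ReducingPaths G C a p b q) : ¬ IsOptimalColoring G C := by
  rintro ⟨-, hcard⟩
  obtain ⟨C', hC', hlt⟩ := h.exists_card_lt
  have : chi G ≤ C'.card := Nat.sInf_le ⟨C', hC', rfl⟩
  omega

end ReducingPaths

namespace IsOptimalColoring

variable {a b x y : V} {p q : List V} {i j : ℕ}

theorem adj_of_forall_adj_take (hC : IsOptimalColoring G C) (ha : {a} ∈ C) (hb : {b} ∈ C)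
    (hp : (a :: p).IsChain (Lonely G C)) (hq : (b :: q).IsChain (Lonely G C))
    (hrp : IsRainbow C (a :: p)) (hrq : IsRainbow C (b :: q)) (hdisj : ∀ x ∈ a :: p, x ∉ b :: q)
    (hx : (a :: p)[i]? = some x) (hy : (b :: q)[j]? = some y)
    (h₁ : ∀ x' ∈ (a :: p).take i, ∀ y' ∈ (b :: q).take (j + 1), G.Adj x' y')
    (h₂ : ∀ x' ∈ (a :: p).take (i + 1), ∀ y' ∈ (b :: q).take j, G.Adj x' y') :
    G.Adj x y := by
  have hy_take : y ∈ (b :: q).take (j + 1) := List.mem_take_add_one_iff.2 (Or.inr hy)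
  by_contra hxy
  by_cases hsame : ∃ I ∈ C, x ∈ I ∧ y ∈ I
  · obtain ⟨I, hI, hxI, hyI⟩ := hsame
    have hyx := hC.1.eq_of_forall_adj_take ha hp hx hI hxI hyI fun z hz => h₁ z hz y hy_take
    exact hdisj y (hyx ▸ List.mem_of_getElem? hx) (List.mem_of_mem_take hy_take)
  refine (ReducingPaths.of_take hC.1 ha hb hp hq hrp hrq hx hy hxy
    fun x' hx' y' hy' => ?_).not_isOptimalColoring hC
  rcases List.mem_take_add_one_iff.1 hx' with hx' | hx'
  · exact hC.1.separated_of_adj (h₁ x' hx' y' hy')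
  rcases List.mem_take_add_one_iff.1 hy' with hy' | hy'
  · exact hC.1.separated_of_adj (h₂ x' (List.mem_take_add_one_iff.2 (Or.inr hx')) y' hy')
  rw [Option.some_inj.1 (hx'.symm.trans hx), Option.some_inj.1 (hy'.symm.trans hy)]
  exact fun I hI hxI hyI => hsame ⟨I, hI, hxI, hyI⟩

end IsOptimalColoring

end

theorem statement_1_general (G : SimpleGraph V) (C : Finset (Finset V))
    (hC : IsOptimalColoring G C)
    (a b : V) (ha : ({a} : Finset V) ∈ C) (hb : ({b} : Finset V) ∈ C)
    (pa pb : List V)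
    (hpa : IsLonelyPath G C pa) (hpb : IsLonelyPath G C pb)
    (hheada : pa.head? = some a) (hheadb : pb.head? = some b)
    (hclassa : ∀ I ∈ C, ∀ x ∈ pa, ∀ y ∈ pa, x ∈ I → y ∈ I → x = y)
    (hclassb : ∀ I ∈ C, ∀ x ∈ pb, ∀ y ∈ pb, x ∈ I → y ∈ I → x = y)
    (hdisj : ∀ x ∈ pa, x ∉ pb) :
    ∀ x ∈ pa, ∀ y ∈ pb, G.Adj x y := by
  obtain ⟨p, rfl⟩ := List.head?_eq_some_iff.1 hheada
  obtain ⟨q, rfl⟩ := List.head?_eq_some_iff.1 hheadb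
  have hrp := isRainbow_of_nodup hpa.2.1 hclassa
  have hrq := isRainbow_of_nodup hpb.2.1 hclassb
  have key : ∀ i j, ∀ x ∈ (a :: p).take i, ∀ y ∈ (b :: q).take j, G.Adj x y := by
    intro i
    induction i with
    | zero => simp
    | succ i ihi =>
      intro j
      induction j with
      | zero => simp
      | succ j ihj =>
        intro x hx y hy
        rcases List.mem_take_add_one_iff.1 hx with hx' | hx'
        · exact ihi (j + 1) x hx' y hy
        rcases List.mem_take_add_one_iff.1 hy with hy' | hy'
        · exact ihj x hx y hy'
        exact hC.adj_of_forall_adj_take ha hb hpa.2.2 hpb.2.2 hrp hrq hdisj hx' hy'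
          (ihi (j + 1)) ihj
  intro x hx y hy
  exact key _ _ x (by rwa [List.take_length]) y (by rwa [List.take_length])

theorem statement_1 (G : SimpleGraph V) (C : Finset (Finset V))
    (hC : IsOptimalColoring G C)
    (a b : V) (hab : a ≠ b) (ha : ({a} : Finset V) ∈ C) (hb : ({b} : Finset V) ∈ C)
    (pa pb : List V)
    (hpa : IsLonelyPath G C pa) (hpb : IsLonelyPath G C pb)
    (hheada : pa.head? = some a) (hheadb : pb.head? = some b)
    (hclassa : ∀ I ∈ C, ∀ x ∈ pa, ∀ y ∈ pa, x ∈ I → y ∈ I → x = y)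
    (hclassb : ∀ I ∈ C, ∀ x ∈ pb, ∀ y ∈ pb, x ∈ I → y ∈ I → x = y)
    (hdisj : ∀ x ∈ pa, x ∉ pb) :
    ∀ x ∈ pa, ∀ y ∈ pb, G.Adj x y :=
  statement_1_general G C hC a b ha hb pa pb hpa hpb hheada hheadb hclassa hclassb hdisj
end

section
/- Let t be an integer and G a finite simple graph with χ(G) > (ω(G) + Δ(G) + 1)/2 + t, and let C = {I_1, …, I_m} be an optimal coloring of G. Then for each j with 1 ≤ j ≤ m there exists a vertex v_j ∈ I_j such that |L_C(v_j)| ≥ ω(G) + 2t. -/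
open Finset

variable {V : Type*} [Fintype V] [DecidableEq V]

/-!
Take a vertex `v` of `I_j` with a neighbour in every other color class; one exists, since
otherwise every vertex of `I_j` could be recolored into some other class, giving a coloring with
fewer colors. Among the `χ - 1` other classes, those in which `v` has a single neighbour contribute
a lonely edge each, and the others contribute at least two neighbours each, so
`2 (χ - 1) ≤ deg v + |L_C(v)| ≤ Δ + |L_C(v)|`, which with the hypothesis gives `|L_C(v)| ≥ ω + 2t`.
-/

namespace IsColoring

variable {G : SimpleGraph V} {C : Finset (Finset V)}

omit [Fintype V] [DecidableEq V] in
theorem eq_of_mem_s3 (hC : IsColoring G C) {J K : Finset V} (hJ : J ∈ C) (hK : K ∈ C) {x : V}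
    (hxJ : x ∈ J) (hxK : x ∈ K) : J = K :=
  (hC.2.1 x).unique ⟨hJ, hxJ⟩ ⟨hK, hxK⟩

omit [Fintype V] in
theorem card_biUnion_filter (hC : IsColoring G C) {D : Finset (Finset V)} (hD : D ⊆ C)
    (p : V → Prop) [DecidablePred p] :
    #(D.biUnion fun J => {x ∈ J | p x}) = ∑ J ∈ D, #{x ∈ J | p x} := by
  refine card_biUnion fun J hJ K hK hJK => disjoint_left.2 fun x hxJ hxK => hJK ?_
  exact hC.eq_of_mem_s3 (hD hJ) (hD hK) (mem_filter.1 hxJ).1 (mem_filter.1 hxK).1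

end IsColoring

def dissolve (C : Finset (Finset V)) (I : Finset V) (g : V → Finset V) : Finset (Finset V) :=
  (C.erase I).image fun J => J ∪ {v ∈ I | g v = J}

omit [Fintype V] in
theorem card_dissolve_lt {C : Finset (Finset V)} {I : Finset V} (hI : I ∈ C)
    (g : V → Finset V) : #(dissolve C I g) < #C :=
  card_image_le.trans_lt (card_erase_lt_of_mem hI)

omit [Fintype V] in
theorem IsColoring.dissolve {G : SimpleGraph V} {C : Finset (Finset V)} (hC : IsColoring G C)
    {I : Finset V} (hI : I ∈ C) {g : V → Finset V}
    (hg : ∀ v ∈ I, g v ∈ C ∧ g v ≠ I ∧ ∀ w ∈ g v, ¬ G.Adj v w) :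
    IsColoring G (dissolve C I g) := by
  have hmem : ∀ x J, x ∈ J ∪ {v ∈ I | g v = J} ↔ x ∈ J ∨ x ∈ I ∧ g x = J := by
    simp only [mem_union, mem_filter, implies_true]
  have hcover : ∀ x, ∃ J ∈ C.erase I, x ∈ J ∪ {v ∈ I | g v = J} := by
    intro x
    by_cases hxI : x ∈ I
    · exact ⟨g x, mem_erase.2 ⟨(hg x hxI).2.1, (hg x hxI).1⟩, (hmem _ _).2 (.inr ⟨hxI, rfl⟩)⟩
    · obtain ⟨J, ⟨hJ, hxJ⟩, -⟩ := hC.2.1 x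
      exact ⟨J, mem_erase.2 ⟨fun h => hxI (h ▸ hxJ), hJ⟩, (hmem _ _).2 (.inl hxJ)⟩
  have hunique : ∀ x, ∀ J ∈ C.erase I, ∀ K ∈ C.erase I,
      x ∈ J ∪ {v ∈ I | g v = J} → x ∈ K ∪ {v ∈ I | g v = K} → J = K := by
    intro x J hJ K hK hxJ hxK
    obtain ⟨hJI, hJ⟩ := mem_erase.1 hJ
    obtain ⟨hKI, hK⟩ := mem_erase.1 hK
    rcases (hmem _ _).1 hxJ with hxJ | ⟨hxI, rfl⟩ <;> rcases (hmem _ _).1 hxK with hxK | ⟨hxI', rfl⟩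
    · exact hC.eq_of_mem_s3 hJ hK hxJ hxK
    · exact absurd (hC.eq_of_mem_s3 hJ hI hxJ hxI') hJI
    · exact absurd (hC.eq_of_mem_s3 hK hI hxK hxI) hKI
    · rfl
  refine ⟨?_, fun x => ?_, ?_⟩
  · simp only [_root_.dissolve, forall_mem_image]
    exact fun J hJ => (hC.1 J (mem_of_mem_erase hJ)).mono subset_union_left
  · obtain ⟨J, hJ, hxJ⟩ := hcover x
    refine ⟨_, ⟨mem_image_of_mem _ hJ, hxJ⟩, ?_⟩
    rintro _ ⟨hK', hxK⟩
    obtain ⟨K, hK, rfl⟩ := mem_image.1 hK'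
    rw [hunique x K hK J hJ hxK hxJ]
  · simp only [_root_.dissolve, forall_mem_image]
    intro J hJ v hv w hw hvw
    have hJC := mem_of_mem_erase hJ
    rcases (hmem _ _).1 hv with hv | ⟨hvI, rfl⟩ <;> rcases (hmem _ _).1 hw with hw | ⟨hwI, hgw⟩
    · exact hC.2.2 J hJC v hv w hw hvw
    · exact (hg w hwI).2.2 v (hgw ▸ hv) hvw.symm
    · exact (hg v hvI).2.2 w hw hvw
    · exact hC.2.2 I hI v hvI w hwI hvw

omit [Fintype V] in
theorem IsOptimalColoring.exists_forall_exists_adj {G : SimpleGraph V} {C : Finset (Finset V)}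
    (hC : IsOptimalColoring G C) {I : Finset V} (hI : I ∈ C) :
    ∃ v ∈ I, ∀ J ∈ C, J ≠ I → ∃ w ∈ J, G.Adj v w := by
  by_contra! hmove
  choose! g hg using hmove
  have hchi : chi G ≤ #(dissolve C I g) := Nat.sInf_le ⟨_, hC.1.dissolve hI hg, rfl⟩
  exact (card_dissolve_lt hI g).not_ge (hC.2 ▸ hchi)

section Lonely

variable {G : SimpleGraph V} [DecidableRel G.Adj] {C : Finset (Finset V)}

omit [Fintype V] [DecidableEq V] in
theorem lonely_of_filter_adj_eq_singleton {J : Finset V} (hJ : J ∈ C) {v w : V} (hvJ : v ∉ J)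
    (hJw : {x ∈ J | G.Adj v x} = {w}) : Lonely G C v w := by
  have hwJ : w ∈ J := (mem_filter.1 (hJw ▸ mem_singleton_self w)).1
  refine ⟨J, hJ, hvJ, hwJ, fun x hxJ => ⟨fun hvx => ?_, fun hxw => ?_⟩⟩
  · simpa [hJw] using mem_filter.2 ⟨hxJ, hvx⟩
  · subst hxw
    exact (mem_filter.1 (hJw ▸ mem_singleton_self x)).2

theorem IsColoring.degree_eq_sum (hC : IsColoring G C) {I : Finset V} (hI : I ∈ C) {v : V}
    (hvI : v ∈ I) : G.degree v = ∑ J ∈ C.erase I, #{x ∈ J | G.Adj v x} := by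
  rw [← hC.card_biUnion_filter (erase_subset I C), ← G.card_neighborFinset_eq_degree]
  congr 1
  ext x
  simp only [SimpleGraph.mem_neighborFinset, mem_biUnion, mem_filter, mem_erase]
  refine ⟨fun hvx => ?_, fun ⟨_, _, _, hvx⟩ => hvx⟩
  obtain ⟨J, ⟨hJ, hxJ⟩, -⟩ := hC.2.1 x
  exact ⟨J, ⟨fun h => hC.2.2 I hI v hvI x (h ▸ hxJ) hvx, hJ⟩, hxJ, hvx⟩

theorem IsColoring.card_filter_eq_one_le_ncard_lonely (hC : IsColoring G C) {I : Finset V}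
    (hI : I ∈ C) {v : V} (hvI : v ∈ I) :
    #{J ∈ C.erase I | #{x ∈ J | G.Adj v x} = 1} ≤ {u | Lonely G C v u}.ncard := by
  set D := {J ∈ C.erase I | #{x ∈ J | G.Adj v x} = 1}
  have hDC : D ⊆ C := (filter_subset _ _).trans (erase_subset I C)
  have hcard : #(D.biUnion fun J => {x ∈ J | G.Adj v x}) = #D := by
    rw [hC.card_biUnion_filter hDC, sum_congr rfl fun J hJ => (mem_filter.1 hJ).2, sum_const,
      smul_eq_mul, mul_one]
  rw [← hcard, ← Set.ncard_coe_finset]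
  refine Set.ncard_le_ncard (fun u hu => ?_) (Set.toFinite _)
  obtain ⟨J, hJ, hu⟩ := mem_biUnion.1 (mem_coe.1 hu)
  obtain ⟨hJI, hJ'⟩ := mem_filter.1 hJ
  obtain ⟨w, hw⟩ := card_eq_one.1 hJ'
  have hvJ : v ∉ J := fun hvJ => (mem_erase.1 hJI).1 (hC.eq_of_mem_s3 (hDC hJ) hI hvJ hvI)
  rw [hw, mem_singleton] at hu
  exact hu ▸ lonely_of_filter_adj_eq_singleton (hDC hJ) hvJ hw

theorem IsColoring.two_mul_le_degree_add_ncard_lonely (hC : IsColoring G C) {I : Finset V}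
    (hI : I ∈ C) {v : V} (hvI : v ∈ I) (hv : ∀ J ∈ C, J ≠ I → ∃ w ∈ J, G.Adj v w) :
    2 * (#C - 1) ≤ G.degree v + {u | Lonely G C v u}.ncard := by
  have hpos : ∀ J ∈ C.erase I, 0 < #{x ∈ J | G.Adj v x} := fun J hJ => by
    obtain ⟨w, hwJ, hvw⟩ := hv J (mem_of_mem_erase hJ) (mem_erase.1 hJ).1
    exact card_pos.2 ⟨w, mem_filter.2 ⟨hwJ, hvw⟩⟩
  calc 2 * (#C - 1) = ∑ J ∈ C.erase I, 2 := by rw [sum_const, card_erase_of_mem hI, smul_eq_mul,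
        mul_comm]
    _ ≤ ∑ J ∈ C.erase I, (#{x ∈ J | G.Adj v x} + if #{x ∈ J | G.Adj v x} = 1 then 1 else 0) :=
        sum_le_sum fun J hJ => by have := hpos J hJ; split_ifs <;> omega
    _ = G.degree v + #{J ∈ C.erase I | #{x ∈ J | G.Adj v x} = 1} := by
        rw [sum_add_distrib, hC.degree_eq_sum hI hvI, sum_boole, Nat.cast_id]
    _ ≤ G.degree v + {u | Lonely G C v u}.ncard :=
        Nat.add_le_add_left (hC.card_filter_eq_one_le_ncard_lonely hI hvI) _

end Lonely

theorem statement_3 (G : SimpleGraph V) [DecidableRel G.Adj] (t : ℤ)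
    (h : ((G.cliqueNum : ℝ) + G.maxDegree + 1) / 2 + t < (chi G : ℝ))
    (C : Finset (Finset V)) (hC : IsOptimalColoring G C) :
    ∀ I ∈ C, ∃ v ∈ I,
      (G.cliqueNum : ℤ) + 2 * t ≤ (({u | Lonely G C v u} : Set V).ncard : ℤ) := by
  intro I hI
  obtain ⟨v, hvI, hv⟩ := hC.exists_forall_exists_adj hI
  refine ⟨v, hvI, ?_⟩
  have hcount := hC.1.two_mul_le_degree_add_ncard_lonely hI hvI hv
  have hdeg := G.degree_le_maxDegree v
  have hpos : 0 < #C := card_pos.2 ⟨I, hI⟩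
  rw [hC.2] at hcount hpos
  have hchi : (G.cliqueNum : ℤ) + G.maxDegree + 1 + 2 * t < 2 * chi G := by
    exact_mod_cast (by linarith : (G.cliqueNum : ℝ) + G.maxDegree + 1 + 2 * t < 2 * chi G)
  omega
end

section
/- Let G be a finite simple graph and H an induced subgraph of G (with G∖H denoting the subgraph induced on the complementary vertex set). If χ(G) = χ(G∖H) + χ(H), then ι(G) ≥ ι(G∖H) + ι(H). -/
open Finset

variable {V : Type*} [Fintype V] [DecidableEq V]

/-! Juxtapose an optimal coloring of `G ∖ H` and one of `H`, each with the maximum number of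
singleton classes. The result is a coloring of `G` with `χ(G ∖ H) + χ(H) = χ(G)` classes, hence
optimal, and it has `ι(G ∖ H) + ι(H)` singleton classes. -/

section Stinginess

variable {W : Type*} [Fintype W] (G : SimpleGraph W)

lemma exists_isColoring : ∃ C, IsColoring G C := by
  refine ⟨univ.map ⟨singleton, singleton_injective⟩, by simp,
    fun v => ⟨{v}, by simp, by simp⟩, ?_⟩
  simp only [mem_map, mem_univ, true_and, Function.Embedding.coeFn_mk]
  rintro _ ⟨u, rfl⟩ v hv w hw
  rw [mem_singleton] at hv hw
  subst hv hw
  exact G.irrefl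

lemma exists_isOptimalColoring : ∃ C, IsOptimalColoring G C := by
  obtain ⟨C, hC⟩ := exists_isColoring G
  exact Nat.sInf_mem (s := {n | ∃ C, IsColoring G C ∧ #C = n}) ⟨#C, C, hC, rfl⟩

lemma bddAbove_card_singleton_classes :
    BddAbove {n | ∃ C : Finset (Finset W), IsOptimalColoring G C ∧
      #(C.filter fun I => #I = 1) = n} :=
  ⟨Fintype.card (Finset W), by rintro _ ⟨C, -, rfl⟩; exact card_le_univ _⟩

lemma card_singleton_classes_le_stinginess {C : Finset (Finset W)}
    (hC : IsOptimalColoring G C) : #(C.filter fun I => #I = 1) ≤ stinginess G :=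
  le_csSup (bddAbove_card_singleton_classes G) ⟨C, hC, rfl⟩

lemma exists_isOptimalColoring_card_singleton_classes_eq_stinginess :
    ∃ C, IsOptimalColoring G C ∧ #(C.filter fun I => #I = 1) = stinginess G := by
  obtain ⟨C, hC⟩ := exists_isOptimalColoring G
  exact Nat.sSup_mem (s := {n | ∃ C, IsOptimalColoring G C ∧ #(C.filter fun I => #I = 1) = n})
    ⟨_, C, hC, rfl⟩ (bddAbove_card_singleton_classes G)

end Stinginess

section LiftClasses

variable {W : Type*} {G : SimpleGraph W} {S T : Set W}

def liftClasses (C : Finset (Finset S)) : Finset (Finset W) :=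
  C.map (mapEmbedding (Function.Embedding.subtype (· ∈ S))).toEmbedding

lemma mem_liftClasses {C : Finset (Finset S)} {J : Finset W} :
    J ∈ liftClasses C ↔ ∃ I ∈ C, I.map (Function.Embedding.subtype _) = J := by
  simp [liftClasses]

lemma card_liftClasses (C : Finset (Finset S)) : #(liftClasses C) = #C :=
  card_map _

lemma card_filter_liftClasses (C : Finset (Finset S)) :
    #((liftClasses C).filter fun I => #I = 1) = #(C.filter fun I => #I = 1) := by
  simp [liftClasses, filter_map]

lemma mem_of_mem_liftClasses {C : Finset (Finset S)} {J : Finset W} {v : W}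
    (hJ : J ∈ liftClasses C) (hv : v ∈ J) : v ∈ S := by
  obtain ⟨I, -, rfl⟩ := mem_liftClasses.mp hJ
  obtain ⟨a, -, rfl⟩ := mem_map.mp hv
  exact a.2

lemma IsColoring.existsUnique_mem_liftClasses {C : Finset (Finset S)}
    (hC : IsColoring (G.induce S) C) {v : W} (hv : v ∈ S) :
    ∃! J, J ∈ liftClasses C ∧ v ∈ J := by
  obtain ⟨I, ⟨hI, hvI⟩, huniq⟩ := hC.2.1 ⟨v, hv⟩
  refine ⟨_, ⟨mem_liftClasses.mpr ⟨I, hI, rfl⟩, mem_map_of_mem _ hvI⟩, ?_⟩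
  rintro _ ⟨hJ, hvJ⟩
  obtain ⟨I', hI', rfl⟩ := mem_liftClasses.mp hJ
  obtain ⟨a, haI', rfl⟩ := mem_map.mp hvJ
  rw [huniq I' ⟨hI', haI'⟩]

lemma IsColoring.not_adj_of_mem_liftClasses {C : Finset (Finset S)}
    (hC : IsColoring (G.induce S) C) {J : Finset W} (hJ : J ∈ liftClasses C) :
    ∀ v ∈ J, ∀ w ∈ J, ¬ G.Adj v w := by
  obtain ⟨I, hI, rfl⟩ := mem_liftClasses.mp hJ
  simp only [mem_map, Function.Embedding.coe_subtype, forall_exists_index, and_imp]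
  rintro _ a ha rfl _ b hb rfl
  exact hC.2.2 I hI a ha b hb

lemma IsColoring.nonempty_of_mem_liftClasses {C : Finset (Finset S)}
    (hC : IsColoring (G.induce S) C) {J : Finset W} (hJ : J ∈ liftClasses C) : J.Nonempty := by
  obtain ⟨I, hI, rfl⟩ := mem_liftClasses.mp hJ
  exact (hC.1 I hI).map

lemma IsColoring.disjoint_liftClasses (hST : Disjoint S T) {C₁ : Finset (Finset S)}
    {C₂ : Finset (Finset T)} (hC₁ : IsColoring (G.induce S) C₁) :
    Disjoint (liftClasses C₁) (liftClasses C₂) := by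
  refine disjoint_left.mpr fun J hJ₁ hJ₂ => ?_
  obtain ⟨v, hv⟩ := hC₁.nonempty_of_mem_liftClasses hJ₁
  exact hST.notMem_of_mem_left (mem_of_mem_liftClasses hJ₁ hv) (mem_of_mem_liftClasses hJ₂ hv)

variable [DecidableEq W] {C₁ : Finset (Finset S)} {C₂ : Finset (Finset T)}

lemma IsColoring.union_liftClasses (hST : IsCompl S T) (hC₁ : IsColoring (G.induce S) C₁)
    (hC₂ : IsColoring (G.induce T) C₂) : IsColoring G (liftClasses C₁ ∪ liftClasses C₂) := by
  refine ⟨fun J hJ => ?_, fun v => ?_, fun J hJ => ?_⟩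
  · rcases mem_union.mp hJ with hJ | hJ
    exacts [hC₁.nonempty_of_mem_liftClasses hJ, hC₂.nonempty_of_mem_liftClasses hJ]
  · have union_of_left {A B : Finset (Finset W)} (hA : ∃! J, J ∈ A ∧ v ∈ J)
        (hB : ∀ J ∈ B, v ∉ J) : ∃! J, J ∈ A ∪ B ∧ v ∈ J := by
      obtain ⟨J, hJ, huniq⟩ := hA
      refine ⟨J, ⟨mem_union_left _ hJ.1, hJ.2⟩, fun J' ⟨hJ', hvJ'⟩ => huniq J' ⟨?_, hvJ'⟩⟩
      exact (mem_union.mp hJ').resolve_right fun hJ'B => hB J' hJ'B hvJ'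
    rcases hST.codisjoint.top_le (Set.mem_univ v) with hv | hv
    · exact union_of_left (hC₁.existsUnique_mem_liftClasses hv) fun J hJ hvJ =>
        hST.disjoint.notMem_of_mem_left hv (mem_of_mem_liftClasses hJ hvJ)
    · rw [union_comm]
      exact union_of_left (hC₂.existsUnique_mem_liftClasses hv) fun J hJ hvJ =>
        hST.disjoint.notMem_of_mem_left (mem_of_mem_liftClasses hJ hvJ) hv
  · rcases mem_union.mp hJ with hJ | hJ
    exacts [hC₁.not_adj_of_mem_liftClasses hJ, hC₂.not_adj_of_mem_liftClasses hJ]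

lemma IsOptimalColoring.union_liftClasses (hST : IsCompl S T)
    (hχ : chi G = chi (G.induce S) + chi (G.induce T))
    (hC₁ : IsOptimalColoring (G.induce S) C₁) (hC₂ : IsOptimalColoring (G.induce T) C₂) :
    IsOptimalColoring G (liftClasses C₁ ∪ liftClasses C₂) := by
  refine ⟨hC₁.1.union_liftClasses hST hC₂.1, ?_⟩
  rw [card_union_of_disjoint (hC₁.1.disjoint_liftClasses hST.disjoint), card_liftClasses,
    card_liftClasses, hC₁.2, hC₂.2, hχ]

lemma IsColoring.card_singleton_classes_union_liftClasses (hST : Disjoint S T)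
    (hC₁ : IsColoring (G.induce S) C₁) :
    #((liftClasses C₁ ∪ liftClasses C₂).filter fun I => #I = 1) =
      #(C₁.filter fun I => #I = 1) + #(C₂.filter fun I => #I = 1) := by
  rw [filter_union, card_union_of_disjoint ((hC₁.disjoint_liftClasses hST).mono
    (filter_subset _ _) (filter_subset _ _)), card_filter_liftClasses, card_filter_liftClasses]

end LiftClasses

theorem statement_5 (G : SimpleGraph V) (s : Finset V)
    (h : chi G = chi (G.induce (((sᶜ : Finset V) : Set V)))
      + chi (G.induce ((s : Set V)))) :
    stinginess (G.induce (((sᶜ : Finset V) : Set V)))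
      + stinginess (G.induce ((s : Set V))) ≤ stinginess G := by
  have hcompl : IsCompl ((sᶜ : Finset V) : Set V) (s : Set V) := by
    rw [coe_compl]
    exact isCompl_compl.symm
  obtain ⟨C₁, hC₁, hι₁⟩ := exists_isOptimalColoring_card_singleton_classes_eq_stinginess
    (G.induce ((sᶜ : Finset V) : Set V))
  obtain ⟨C₂, hC₂, hι₂⟩ := exists_isOptimalColoring_card_singleton_classes_eq_stinginess
    (G.induce (s : Set V))
  calc _ = #((liftClasses C₁ ∪ liftClasses C₂).filter fun I => #I = 1) := by
        rw [hC₁.1.card_singleton_classes_union_liftClasses hcompl.disjoint, hι₁, hι₂]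
    _ ≤ stinginess G :=
        card_singleton_classes_le_stinginess G (hC₁.union_liftClasses hcompl h hC₂)
end

section
/- If G is a finite simple graph satisfying χ(G) > (ω(G) + Δ(G) + 1)/2, then |G| − Δ(G) ≥ α(G) + (ω(G) − 1)/2. -/
open Finset

variable {V : Type*} [Fintype V] [DecidableEq V]

/-!
Let `A` be a maximum independent set and `c` a minimum coloring of `G - A`, with `k ≥ χ(G) - 1`
colors of which `s` form singleton classes, so that `n - α ≥ 2k - s`. The singleton classes of a
minimum coloring are pairwise adjacent. If `2k ≥ ω + Δ + 2`, counting the neighbors of a singleton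
`v` class by class shows that at least `ω + 1 - s` classes contain exactly one neighbor `w` of `v`;
swapping `v` and `w` keeps the coloring minimum and makes `{w}` a singleton class. Hence, if
`2s > ω`, the singletons together with suitably chosen such `w` form a clique of order `ω + 1`.
So `2s ≤ ω` (applied to `c`, or to `c` extended by the class `A`), and
`2(n - α) ≥ 4k - ω ≥ ω + 2Δ`.
-/

section Image

variable {α β ι : Type*} [DecidableEq β]

lemma image_comp_perm {U : Finset α} {σ : Equiv.Perm α} (hσ : ∀ x, σ x ∈ U ↔ x ∈ U)
    (c : α → β) : U.image (c ∘ σ) = U.image c := by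
  ext i
  simp only [mem_image, Function.comp_apply]
  constructor
  · rintro ⟨x, hx, rfl⟩
    exact ⟨σ x, (hσ x).2 hx, rfl⟩
  · rintro ⟨x, hx, rfl⟩
    exact ⟨σ.symm x, (hσ _).1 (by simpa using hx), by simp⟩

lemma exists_rainbow_transversal (c : α → β) (m : ℕ) :
    ∀ (L : ι → Finset α) (S : Finset ι), m ≤ #S → (∀ i ∈ S, m ≤ #((L i).image c)) →
      ∃ T : Finset (ι × α), #T = m ∧ (∀ p ∈ T, p.1 ∈ S ∧ p.2 ∈ L p.1) ∧
        Set.InjOn Prod.fst (T : Set (ι × α)) ∧ Set.InjOn (c ∘ Prod.snd) (T : Set (ι × α)) := by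
  classical
  induction m with
  | zero => exact fun _ _ _ _ => ⟨∅, by simp⟩
  | succ n ih =>
    intro L S hS hL
    obtain ⟨i, hi⟩ : S.Nonempty := card_pos.1 (by omega)
    obtain ⟨a, ha⟩ : (L i).Nonempty :=
      (card_pos.1 (show 0 < #((L i).image c) by have := hL i hi; omega)).of_image
    obtain ⟨T, hTcard, hTmem, hTfst, hTcol⟩ :=
      ih (fun j => {b ∈ L j | c b ≠ c a}) (S.erase i) (by rw [card_erase_of_mem hi]; omega)
        fun j hj => by
          have hsub : ((L j).image c).erase (c a) ⊆ {b ∈ L j | c b ≠ c a}.image c := by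
            intro x hx
            obtain ⟨hxa, hx⟩ := mem_erase.1 hx
            obtain ⟨b, hb, rfl⟩ := mem_image.1 hx
            exact mem_image_of_mem c (mem_filter.2 ⟨hb, hxa⟩)
          have := card_le_card hsub
          have := pred_card_le_card_erase (s := (L j).image c) (a := c a)
          have := hL j (mem_of_mem_erase hj)
          omega
    have hfresh : ∀ p ∈ T, p.1 ≠ i ∧ c p.2 ≠ c a := fun p hp =>
      ⟨ne_of_mem_erase (hTmem p hp).1, (mem_filter.1 (hTmem p hp).2).2⟩
    have hiaT : (i, a) ∉ T := fun h => (hfresh _ h).1 rfl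
    refine ⟨insert (i, a) T, by rw [card_insert_of_notMem hiaT, hTcard], ?_, ?_, ?_⟩
    · intro p hp
      rcases mem_insert.1 hp with rfl | hp
      · exact ⟨hi, ha⟩
      · exact ⟨mem_of_mem_erase (hTmem p hp).1, mem_of_mem_filter _ (hTmem p hp).2⟩
    · rw [coe_insert, Set.injOn_insert (mod_cast hiaT)]
      exact ⟨hTfst, fun ⟨p, hp, hpi⟩ => (hfresh p hp).1 hpi⟩
    · rw [coe_insert, Set.injOn_insert (mod_cast hiaT)]
      exact ⟨hTcol, fun ⟨p, hp, hpa⟩ => (hfresh p hp).2 hpa⟩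

end Image

section UniquelyColored

variable {α β : Type*} [DecidableEq α] [DecidableEq β]

def uniquelyColored (s : Finset α) (c : α → β) : Finset α :=
  {x ∈ s | ∀ y ∈ s, c y = c x → y = x}

lemma mem_uniquelyColored {s : Finset α} {c : α → β} {x : α} :
    x ∈ uniquelyColored s c ↔ x ∈ s ∧ ∀ y ∈ s, c y = c x → y = x :=
  mem_filter

lemma injOn_uniquelyColored (s : Finset α) (c : α → β) :
    Set.InjOn c (uniquelyColored s c : Set α) := fun x hx _ hy hxy =>
  (mem_uniquelyColored.1 hy).2 x (mem_uniquelyColored.1 hx).1 hxy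

/-- Colors that are not used exactly once are used at least twice. -/
lemma two_mul_card_image_le (s : Finset α) (c : α → β) :
    2 * #(s.image c) ≤ #s + #(uniquelyColored s c) := by
  set u := uniquelyColored s c
  have hu : u ⊆ s := filter_subset _ _
  have hrepeated : 2 * #((s \ u).image c) ≤ #(s \ u) := by
    refine mul_card_image_le_card _ 2 fun i hi => ?_
    obtain ⟨x, hx, rfl⟩ := mem_image.1 hi
    obtain ⟨hxs, hxu⟩ := mem_sdiff.1 hx
    obtain ⟨y, hys, hyx, hyne⟩ : ∃ y ∈ s, c y = c x ∧ y ≠ x := by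
      simpa [u, mem_uniquelyColored, hxs] using hxu
    have hyu : y ∉ u := fun h => hyne ((mem_uniquelyColored.1 h).2 x hxs hyx.symm).symm
    calc 2 = #{x, y} := (card_pair hyne.symm).symm
      _ ≤ _ := card_le_card <| by
        rintro z hz
        rcases mem_insert.1 hz with rfl | hz
        · exact mem_filter.2 ⟨hx, rfl⟩
        · rw [mem_singleton.1 hz]; exact mem_filter.2 ⟨mem_sdiff.2 ⟨hys, hyu⟩, hyx⟩
  have hsplit : s.image c ⊆ u.image c ∪ (s \ u).image c := by
    rw [← image_union, union_sdiff_of_subset hu]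
  have := card_le_card hsplit
  have := card_union_le (u.image c) ((s \ u).image c)
  have := card_image_le (s := u) (f := c)
  have := card_sdiff_add_card_eq_card hu
  omega

lemma mem_uniquelyColored_comp_perm {U : Finset α} {σ : Equiv.Perm α}
    (hσ : ∀ x, σ x ∈ U ↔ x ∈ U) {c : α → β} {x : α} :
    x ∈ uniquelyColored U (c ∘ σ) ↔ σ x ∈ uniquelyColored U c := by
  simp only [mem_uniquelyColored, Function.comp_apply, hσ]
  refine and_congr_right fun _ => ⟨fun h z hz hzx => ?_, fun h y hy hyx => ?_⟩
  · simpa using congrArg σ (h (σ.symm z) ((hσ _).1 (by simpa using hz)) (by simpa using hzx))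
  · exact σ.injective (h (σ y) ((hσ y).2 hy) hyx)

lemma swap_apply_mem_iff {U : Finset α} {v w : α} (hv : v ∈ U) (hw : w ∈ U) (x : α) :
    Equiv.swap v w x ∈ U ↔ x ∈ U := by
  rcases eq_or_ne x v with rfl | hxv
  · simp [hv, hw]
  rcases eq_or_ne x w with rfl | hxw
  · simp [hv, hw]
  rw [Equiv.swap_apply_of_ne_of_ne hxv hxw]

end UniquelyColored

namespace SimpleGraph

section ColoringOn

variable {α : Type*} (G : SimpleGraph α)

def IsProperColoringOn (U : Finset α) (c : α → ℕ) : Prop :=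
  ∀ x ∈ U, ∀ y ∈ U, G.Adj x y → c x ≠ c y

def IsMinColoringOn (U : Finset α) (c : α → ℕ) : Prop :=
  G.IsProperColoringOn U c ∧ ∀ d, G.IsProperColoringOn U d → #(U.image c) ≤ #(U.image d)

lemma exists_isMinColoringOn (U : Finset α) : ∃ c, G.IsMinColoringOn U c := by
  classical
  have hproper : ∃ n, ∃ c, G.IsProperColoringOn U c ∧ #(U.image c) = n := by
    refine ⟨_, fun x => if hx : x ∈ U then (U.equivFin ⟨x, hx⟩ : ℕ) else 0,
      fun x hx y hy hxy hc => hxy.ne ?_, rfl⟩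
    simpa [hx, hy, Fin.val_inj] using hc
  obtain ⟨c, hc, hcard⟩ := Nat.find_spec hproper
  exact ⟨c, hc, fun d hd => hcard ▸ Nat.find_min' hproper ⟨d, hd, rfl⟩⟩

variable {G} {U : Finset α} {c : α → ℕ}

lemma IsMinColoringOn.comp_perm_of_isProperColoringOn (hc : G.IsMinColoringOn U c)
    {σ : Equiv.Perm α} (hσ : ∀ x, σ x ∈ U ↔ x ∈ U) (hproper : G.IsProperColoringOn U (c ∘ σ)) :
    G.IsMinColoringOn U (c ∘ σ) :=
  ⟨hproper, fun d hd => image_comp_perm hσ c ▸ hc.2 d hd⟩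

variable [DecidableEq α]

lemma IsProperColoringOn.update (hc : G.IsProperColoringOn U c) {v : α} {i : ℕ}
    (hfree : ∀ w ∈ U, G.Adj v w → c w ≠ i) : G.IsProperColoringOn U (Function.update c v i) := by
  intro x hx y hy hxy
  rcases eq_or_ne x v with rfl | hxv
  · simpa [hxy.ne.symm] using (hfree y hy hxy).symm
  rcases eq_or_ne y v with rfl | hyv
  · simpa [hxy.ne] using hfree x hx hxy.symm
  simpa [hxv, hyv] using hc x hx y hy hxy

/-- Otherwise `v` could be recolored with `i`, saving a color. -/
lemma IsMinColoringOn.exists_adj_of_mem_uniquelyColored (hc : G.IsMinColoringOn U c) {v : α}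
    (hv : v ∈ uniquelyColored U c) {i : ℕ} (hi : i ∈ U.image c) (hiv : i ≠ c v) :
    ∃ w ∈ U, c w = i ∧ G.Adj v w := by
  by_contra! hfree
  obtain ⟨hvU, hvunique⟩ := mem_uniquelyColored.1 hv
  have hsub : U.image (Function.update c v i) ⊆ (U.image c).erase (c v) := by
    intro j hj
    obtain ⟨x, hx, rfl⟩ := mem_image.1 hj
    rcases eq_or_ne x v with rfl | hxv
    · simpa [hiv] using hi
    · simpa [hxv] using ⟨fun h => hxv (hvunique x hx h), x, hx, rfl⟩
  have hle := hc.2 _ (hc.1.update fun w hw hvw hcw => hfree w hw hcw hvw)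
  have := card_le_card hsub
  rw [card_erase_of_mem (mem_image_of_mem c hvU)] at this
  have := card_pos.2 ⟨i, hi⟩
  omega

lemma IsMinColoringOn.adj_of_mem_uniquelyColored (hc : G.IsMinColoringOn U c) {u v : α}
    (hu : u ∈ uniquelyColored U c) (hv : v ∈ uniquelyColored U c) (huv : u ≠ v) :
    G.Adj u v := by
  obtain ⟨hvU, hvunique⟩ := mem_uniquelyColored.1 hv
  obtain ⟨w, hwU, hwv, huw⟩ := hc.exists_adj_of_mem_uniquelyColored hu (mem_image_of_mem c hvU)
    fun h => huv ((mem_uniquelyColored.1 hu).2 v hvU h).symm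
  rwa [hvunique w hwU hwv] at huw

lemma IsMinColoringOn.isClique_uniquelyColored (hc : G.IsMinColoringOn U c) :
    G.IsClique (uniquelyColored U c : Set α) :=
  fun _ hu _ hv huv => hc.adj_of_mem_uniquelyColored hu hv huv

variable [DecidableRel G.Adj]

variable (G) in
/-- `w ∈ lonelyNbrs G U c v`: `(v, w)` is a lonely edge (as in `Lonely`) whose target `w` is
not alone in its color class. -/
def lonelyNbrs (U : Finset α) (c : α → ℕ) (v : α) : Finset α :=
  uniquelyColored {w ∈ U | G.Adj v w} c \ uniquelyColored U c

lemma mem_lonelyNbrs {v w : α} :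
    w ∈ lonelyNbrs G U c v ↔ (w ∈ U ∧ G.Adj v w) ∧
      (∀ y ∈ U, G.Adj v y → c y = c w → y = w) ∧ w ∉ uniquelyColored U c := by
  simp [lonelyNbrs, mem_uniquelyColored, and_assoc]

/-- The swap stays proper since `w` is the only neighbor of `v` in its class, and it uses the
same colors. -/
lemma IsMinColoringOn.comp_swap (hc : G.IsMinColoringOn U c) {v w : α}
    (hv : v ∈ uniquelyColored U c) (hw : w ∈ lonelyNbrs G U c v) :
    G.IsMinColoringOn U (c ∘ Equiv.swap v w) := by
  obtain ⟨⟨hwU, hvw⟩, hwunique, -⟩ := mem_lonelyNbrs.1 hw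
  obtain ⟨hvU, hvunique⟩ := mem_uniquelyColored.1 hv
  have hσ := swap_apply_mem_iff hvU hwU
  have hends : ∀ x ∈ U, ∀ y ∈ U, G.Adj x y → (x = v ∨ x = w) →
      c (Equiv.swap v w x) ≠ c (Equiv.swap v w y) := by
    rintro x hx y hy hxy (rfl | rfl) hcol
    · rw [Equiv.swap_apply_left] at hcol
      rcases eq_or_ne y w with rfl | hyw
      · exact hvw.ne (hvunique y hy (by simpa using hcol)).symm
      · rw [Equiv.swap_apply_of_ne_of_ne hxy.ne.symm hyw] at hcol
        exact hyw (hwunique y hy hxy hcol.symm)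
    · rw [Equiv.swap_apply_right] at hcol
      have := hvunique _ ((hσ y).2 hy) hcol.symm
      rw [Equiv.swap_apply_eq_iff, Equiv.swap_apply_left] at this
      exact hxy.ne this.symm
  refine hc.comp_perm_of_isProperColoringOn hσ fun x hx y hy hxy => ?_
  by_cases hx' : x = v ∨ x = w
  · exact hends x hx y hy hxy hx'
  by_cases hy' : y = v ∨ y = w
  · exact (hends y hy x hx hxy.symm hy').symm
  simp only [not_or] at hx' hy'
  simpa [Equiv.swap_apply_of_ne_of_ne hx'.1 hx'.2, Equiv.swap_apply_of_ne_of_ne hy'.1 hy'.2]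
    using hc.1 x hx y hy hxy

lemma mem_lonelyNbrs_comp_swap {v w v' w' : α} (hv : v ∈ uniquelyColored U c)
    (hw : w ∈ lonelyNbrs G U c v) (hw' : w' ∈ lonelyNbrs G U c v') (hcw : c w' ≠ c w) :
    w' ∈ lonelyNbrs G U (c ∘ Equiv.swap v w) v' := by
  obtain ⟨⟨hwU, -⟩, -, -⟩ := mem_lonelyNbrs.1 hw
  obtain ⟨⟨hw'U, hv'w'⟩, hw'unique, hw'S⟩ := mem_lonelyNbrs.1 hw'
  obtain ⟨hvU, hvunique⟩ := mem_uniquelyColored.1 hv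
  have hσ := swap_apply_mem_iff hvU hwU
  have hfix : Equiv.swap v w w' = w' :=
    Equiv.swap_apply_of_ne_of_ne (fun h => hw'S (h ▸ hv)) fun h => hcw (h ▸ rfl)
  refine mem_lonelyNbrs.2 ⟨⟨hw'U, hv'w'⟩, fun y hy hv'y hcy => ?_, ?_⟩
  · simp only [Function.comp_apply, hfix] at hcy
    rcases eq_or_ne y v with rfl | hyv
    · exact absurd (by simpa using hcy) hcw.symm
    rcases eq_or_ne y w with rfl | hyw
    · rw [Equiv.swap_apply_right] at hcy
      exact absurd (hvunique w' hw'U hcy.symm) fun h => hw'S (h ▸ hv)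
    · rw [Equiv.swap_apply_of_ne_of_ne hyv hyw] at hcy
      exact hw'unique y hy hv'y hcy
  · rwa [mem_uniquelyColored_comp_perm hσ, hfix]

/-- After swapping `v` and `w`, the vertex `w` forms a singleton class. -/
lemma IsMinColoringOn.adj_of_mem_lonelyNbrs (hc : G.IsMinColoringOn U c) {u v w : α}
    (hv : v ∈ uniquelyColored U c) (hw : w ∈ lonelyNbrs G U c v)
    (hu : u ∈ uniquelyColored U c) (huv : u ≠ v) : G.Adj w u := by
  obtain ⟨⟨hwU, -⟩, -, hwS⟩ := mem_lonelyNbrs.1 hw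
  have hσ := swap_apply_mem_iff (mem_uniquelyColored.1 hv).1 hwU
  have huw : u ≠ w := fun h => hwS (h ▸ hu)
  refine (hc.comp_swap hv hw).adj_of_mem_uniquelyColored ?_ ?_ huw.symm
  · rwa [mem_uniquelyColored_comp_perm hσ, Equiv.swap_apply_right]
  · rwa [mem_uniquelyColored_comp_perm hσ, Equiv.swap_apply_of_ne_of_ne huv huw]

lemma IsMinColoringOn.adj_of_mem_lonelyNbrs_of_ne (hc : G.IsMinColoringOn U c) {v w v' w' : α}
    (hv : v ∈ uniquelyColored U c) (hw : w ∈ lonelyNbrs G U c v)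
    (hv' : v' ∈ uniquelyColored U c) (hw' : w' ∈ lonelyNbrs G U c v') (hvv' : v ≠ v')
    (hcw : c w ≠ c w') : G.Adj w w' := by
  obtain ⟨⟨hwU, -⟩, -, hwS⟩ := mem_lonelyNbrs.1 hw
  have hσ := swap_apply_mem_iff (mem_uniquelyColored.1 hv).1 hwU
  have hv'w : v' ≠ w := fun h => hwS (h ▸ hv')
  refine ((hc.comp_swap hv hw).adj_of_mem_lonelyNbrs ?_
    (mem_lonelyNbrs_comp_swap hv hw hw' hcw.symm) ?_ hv'w.symm).symm
  · rwa [mem_uniquelyColored_comp_perm hσ, Equiv.swap_apply_of_ne_of_ne hvv'.symm hv'w]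
  · rwa [mem_uniquelyColored_comp_perm hσ, Equiv.swap_apply_right]

lemma IsMinColoringOn.isNClique_union_image_snd (hc : G.IsMinColoringOn U c)
    {T : Finset (α × α)} (hT : ∀ p ∈ T, p.1 ∈ uniquelyColored U c ∧ p.2 ∈ lonelyNbrs G U c p.1)
    (hfst : Set.InjOn Prod.fst (T : Set (α × α)))
    (hcol : Set.InjOn (c ∘ Prod.snd) (T : Set (α × α))) :
    G.IsNClique (#(uniquelyColored U c) + #T) (uniquelyColored U c ∪ T.image Prod.snd) := by
  refine ⟨?_, ?_⟩
  · have := G.symm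
    rw [coe_union, coe_image, isClique_iff, Set.pairwise_union_of_symm]
    refine ⟨hc.isClique_uniquelyColored, ?_, ?_⟩
    · rintro _ ⟨p, hp, rfl⟩ _ ⟨r, hr, rfl⟩ hpr
      have hne : p ≠ r := fun h => hpr (h ▸ rfl)
      exact hc.adj_of_mem_lonelyNbrs_of_ne (hT p hp).1 (hT p hp).2 (hT r hr).1 (hT r hr).2
        (fun h => hne (hfst hp hr h)) fun h => hne (hcol hp hr h)
    · rintro u hu _ ⟨r, hr, rfl⟩ -
      rcases eq_or_ne u r.1 with rfl | hur
      · exact (mem_lonelyNbrs.1 (hT r hr).2).1.2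
      · exact (hc.adj_of_mem_lonelyNbrs (hT r hr).1 (hT r hr).2 hu hur).symm
  · rw [card_union_of_disjoint, card_image_of_injOn hcol.of_comp]
    rw [disjoint_right]
    rintro _ hw
    obtain ⟨p, hp, rfl⟩ := mem_image.1 hw
    exact (mem_lonelyNbrs.1 (hT p hp).2).2.2

section Degree

variable [Fintype α]

/-- Counting the neighbors of a singleton class `{v}` color by color: each of the other
colors is hit, and only the singleton classes and the lonely neighbors are hit once. -/
lemma IsMinColoringOn.cliqueNum_lt_card_add_card_lonelyNbrs (hc : G.IsMinColoringOn U c)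
    {v : α} (hv : v ∈ uniquelyColored U c)
    (hk : G.cliqueNum + G.maxDegree + 2 ≤ 2 * #(U.image c)) :
    G.cliqueNum < #(uniquelyColored U c) + #(lonelyNbrs G U c v) := by
  obtain ⟨hvU, -⟩ := mem_uniquelyColored.1 hv
  set N := {w ∈ U | G.Adj v w}
  have hcolors : (U.image c).erase (c v) ⊆ N.image c := by
    intro i hi
    obtain ⟨hiv, hi⟩ := mem_erase.1 hi
    obtain ⟨w, hwU, rfl, hvw⟩ := hc.exists_adj_of_mem_uniquelyColored hv hi hiv
    exact mem_image_of_mem c (mem_filter.2 ⟨hwU, hvw⟩)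
  have hunique : uniquelyColored N c ⊆ (uniquelyColored U c).erase v ∪ lonelyNbrs G U c v := by
    intro w hw
    by_cases hwS : w ∈ uniquelyColored U c
    · have hvw : G.Adj v w := (mem_filter.1 (mem_uniquelyColored.1 hw).1).2
      exact mem_union_left _ (mem_erase.2 ⟨hvw.ne.symm, hwS⟩)
    · exact mem_union_right _ (mem_sdiff.2 ⟨hw, hwS⟩)
  have hdeg : #N ≤ G.maxDegree :=
    calc #N ≤ #(G.neighborFinset v) := card_le_card fun w hw => by simpa using (mem_filter.1 hw).2
      _ = G.degree v := G.card_neighborFinset_eq_degree v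
      _ ≤ G.maxDegree := G.degree_le_maxDegree v
  have hcount := two_mul_card_image_le N c
  have h₁ := card_le_card hcolors
  have h₂ := (card_le_card hunique).trans (card_union_le _ _)
  rw [card_erase_of_mem (mem_image_of_mem c hvU)] at h₁
  rw [card_erase_of_mem hv] at h₂
  have := card_pos.2 ⟨v, hv⟩
  omega

/-- Otherwise the `s` singleton classes, together with lonely neighbors of `ω + 1 - s` of them
lying in distinct classes, would form a clique of order `ω + 1`. -/
theorem IsMinColoringOn.two_mul_card_uniquelyColored_le (hc : G.IsMinColoringOn U c)
    (hk : G.cliqueNum + G.maxDegree + 2 ≤ 2 * #(U.image c)) :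
    2 * #(uniquelyColored U c) ≤ G.cliqueNum := by
  by_contra! hlarge
  obtain ⟨T, hTcard, hT, hfst, hcol⟩ := exists_rainbow_transversal c
    (G.cliqueNum + 1 - #(uniquelyColored U c)) (lonelyNbrs G U c) (uniquelyColored U c)
    (by omega) fun v hv => by
      rw [card_image_of_injOn (s := lonelyNbrs G U c v)
        ((injOn_uniquelyColored _ c).mono (coe_subset.2 sdiff_subset))]
      have := hc.cliqueNum_lt_card_add_card_lonelyNbrs hv hk
      omega
  have hclique := hc.isNClique_union_image_snd hT hfst hcol
  have := hclique.isClique.card_le_cliqueNum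
  rw [hclique.card_eq] at this
  omega

end Degree

end ColoringOn

end SimpleGraph

section IndependentClass

lemma exists_indep_card_eq_indepNum {α : Type*} [Fintype α] (G : SimpleGraph α) :
    ∃ A : Finset α, (∀ v ∈ A, ∀ w ∈ A, ¬ G.Adj v w) ∧ #A = indepNum G := by
  set S : Set ℕ := {n | ∃ s : Finset α, (∀ v ∈ s, ∀ w ∈ s, ¬ G.Adj v w) ∧ #s = n}
  have hbdd : BddAbove S := ⟨Fintype.card α, by rintro _ ⟨s, -, rfl⟩; exact card_le_univ s⟩
  exact Nat.sSup_mem (s := S) ⟨0, ∅, by simp, rfl⟩ hbdd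

variable {G : SimpleGraph V}


lemma chi_le_card_image {d : V → ℕ} (hd : G.IsProperColoringOn univ d) :
    chi G ≤ #(univ.image d) := by
  set C : Finset (Finset V) := (univ.image d).image fun i => {x ∈ (univ : Finset V) | d x = i}
  have hC : IsColoring G C := by
    refine ⟨?_, fun v => ?_, ?_⟩
    · simp only [C, mem_image]
      rintro _ ⟨_, ⟨x, -, rfl⟩, rfl⟩
      exact ⟨x, by simp⟩
    · refine ⟨{x ∈ (univ : Finset V) | d x = d v},
        ⟨mem_image_of_mem _ (mem_image_of_mem d (mem_univ v)), by simp⟩, ?_⟩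
      rintro _ ⟨hI, hvI⟩
      obtain ⟨i, -, rfl⟩ := mem_image.1 hI
      simp only [mem_filter, mem_univ, true_and] at hvI
      simp [hvI]
    · intro I hI x hx y hy hxy
      obtain ⟨i, -, rfl⟩ := mem_image.1 hI
      simp only [mem_filter, mem_univ, true_and] at hx hy
      exact hd x (mem_univ _) y (mem_univ _) hxy (hx.trans hy.symm)
  exact (Nat.sInf_le ⟨C, hC, rfl⟩ : chi G ≤ #C).trans card_image_le

def extendByClass (A : Finset V) (c : V → ℕ) (x : V) : ℕ := if x ∈ A then 0 else c x + 1

variable {A : Finset V} {c : V → ℕ}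

lemma isProperColoringOn_extendByClass (hA : ∀ v ∈ A, ∀ w ∈ A, ¬ G.Adj v w)
    (hc : G.IsProperColoringOn Aᶜ c) : G.IsProperColoringOn univ (extendByClass A c) := by
  intro x _ y _ hxy
  by_cases hx : x ∈ A <;> by_cases hy : y ∈ A
  · exact absurd hxy (hA x hx y hy)
  all_goals simp only [extendByClass, hx, hy, if_true, if_false]
  · omega
  · omega
  · exact fun h => hc x (mem_compl.2 hx) y (mem_compl.2 hy) hxy (by omega)

lemma card_image_extendByClass_le : #(univ.image (extendByClass A c)) ≤ #(Aᶜ.image c) + 1 := by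
  have hsub : univ.image (extendByClass A c) ⊆ insert 0 ((Aᶜ.image c).image (· + 1)) := by
    intro i hi
    obtain ⟨x, -, rfl⟩ := mem_image.1 hi
    by_cases hx : x ∈ A
    · simp [extendByClass, hx]
    · rw [extendByClass, if_neg hx]
      exact mem_insert_of_mem (mem_image_of_mem _ (mem_image_of_mem c (mem_compl.2 hx)))
  exact (card_le_card hsub).trans
    ((card_insert_le _ _).trans (Nat.add_le_add_right card_image_le 1))

lemma uniquelyColored_subset_extendByClass :
    uniquelyColored Aᶜ c ⊆ uniquelyColored univ (extendByClass A c) := by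
  intro x hx
  obtain ⟨hxA, hxunique⟩ := mem_uniquelyColored.1 hx
  refine mem_uniquelyColored.2 ⟨mem_univ x, fun y _ hyx => ?_⟩
  have hxA' : x ∉ A := mem_compl.1 hxA
  by_cases hy : y ∈ A
  · simp [extendByClass, hy, hxA'] at hyx
  · simp only [extendByClass, hy, hxA', if_false, add_left_inj] at hyx
    exact hxunique y (mem_compl.2 hy) hyx

variable [DecidableRel G.Adj]

/-- Since `χ(G) ≤ χ(G - A) + 1`, either a minimum coloring of `G - A` has at least `χ(G)`
colors, or adding the class `A` to it gives a minimum coloring of `G`. -/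
lemma two_mul_card_uniquelyColored_compl_le
    (hA : ∀ v ∈ A, ∀ w ∈ A, ¬ G.Adj v w) (hc : G.IsMinColoringOn Aᶜ c)
    (h : G.cliqueNum + G.maxDegree + 2 ≤ 2 * chi G) :
    2 * #(uniquelyColored Aᶜ c) ≤ G.cliqueNum := by
  by_cases hk : chi G ≤ #(Aᶜ.image c)
  · exact hc.two_mul_card_uniquelyColored_le (by omega)
  have hext := isProperColoringOn_extendByClass hA hc.1
  have hchi := chi_le_card_image hext
  have hmin : G.IsMinColoringOn univ (extendByClass A c) :=
    ⟨hext, fun d hd => by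
      have := chi_le_card_image hd
      have := card_image_extendByClass_le (A := A) (c := c)
      omega⟩
  have := hmin.two_mul_card_uniquelyColored_le (by omega)
  have := card_le_card (uniquelyColored_subset_extendByClass (A := A) (c := c))
  omega

end IndependentClass

theorem two_mul_indepNum_add_cliqueNum_add_two_mul_maxDegree_le (G : SimpleGraph V)
    [DecidableRel G.Adj] (h : G.cliqueNum + G.maxDegree + 2 ≤ 2 * chi G) :
    2 * indepNum G + G.cliqueNum + 2 * G.maxDegree ≤ 2 * Fintype.card V := by
  obtain ⟨A, hA, hAcard⟩ := exists_indep_card_eq_indepNum G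
  obtain ⟨c, hc⟩ := G.exists_isMinColoringOn Aᶜ
  have hchi : chi G ≤ #(Aᶜ.image c) + 1 :=
    (chi_le_card_image (isProperColoringOn_extendByClass hA hc.1)).trans
      card_image_extendByClass_le
  have hsingle := two_mul_card_uniquelyColored_compl_le hA hc h
  have hcount := two_mul_card_image_le Aᶜ c
  rw [card_compl, hAcard] at hcount
  have := hAcard ▸ card_le_univ A
  omega

theorem statement_8 (G : SimpleGraph V) [DecidableRel G.Adj]
    (h : ((G.cliqueNum : ℝ) + G.maxDegree + 1) / 2 < (chi G : ℝ)) :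
    (indepNum G : ℝ) + ((G.cliqueNum : ℝ) - 1) / 2
      ≤ (Fintype.card V : ℝ) - G.maxDegree := by
  have hlt : ((G.cliqueNum + G.maxDegree + 1 : ℕ) : ℝ) < (2 * chi G : ℕ) := by
    push_cast
    linarith
  have hbound : ((2 * indepNum G + G.cliqueNum + 2 * G.maxDegree : ℕ) : ℝ) ≤
      (2 * Fintype.card V : ℕ) :=
    mod_cast two_mul_indepNum_add_cliqueNum_add_two_mul_maxDegree_le G (by exact_mod_cast hlt)
  push_cast at hbound
  linarith
end
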